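/- Let F be a field, B a unital F-algebra, and h ∈ Z(B)[x] with leading coefficient that is not a zero divisor. Then the B-linear algebra homomorphism ψ: A_h(B) → A_1(B) determined by ψ(x) = x, ψ(ŷ) = y·h (where A_1(B) is the Weyl algebra over B with [y,x] = 1) is injective. -/

import Mathlib

open scoped TensorProduct
noncomputable section
variable (F : Type*) [Field F] (B : Type*) [Ring B] [Algebra F B]

/-- B⟨x,y⟩, the free B-ring on x,y commuting with B, realized as B ⊗[F] F⟨x,y⟩. -/
abbrev BFreeXY := B ⊗[F] FreeAlgebra F (Fin 2)

def Xg : BFreeXY F B := 1 ⊗ₜ FreeAlgebra.ι F 0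
def Yg : BFreeXY F B := 1 ⊗ₜ FreeAlgebra.ι F 1

/-- The image of a polynomial a ∈ B[x] inside B⟨x,y⟩. -/
def polyEl (a : Polynomial B) : BFreeXY F B :=
  a.sum fun n b => b ⊗ₜ[F] (FreeAlgebra.ι F 0) ^ n

/-- The relation yx = xy + h. -/
def AhRel (h : Polynomial B) : BFreeXY F B → BFreeXY F B → Prop :=
  fun a b => a = Yg F B * Xg F B ∧ b = Xg F B * Yg F B + polyEl F B h

/-- The parametric Weyl algebra A_h(B) = B⟨x,y⟩/⟨yx − xy − h⟩. -/
abbrev Ah (h : Polynomial B) := RingQuot (AhRel F B h)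

def mkh (h : Polynomial B) : BFreeXY F B →+* Ah F B h := RingQuot.mkRingHom (AhRel F B h)


def incB (h : Polynomial B) : B →+* Ah F B h :=
  (mkh F B h).comp (Algebra.TensorProduct.includeLeftRingHom)

/-- b is not a (two-sided) zero divisor of B. -/
def NotZD {B : Type*} [Ring B] (b : B) : Prop :=
  ∀ c : B, (c * b = 0 → c = 0) ∧ (b * c = 0 → c = 0)


/-!
Write `h̃` for the polynomial in `x` that `polyEl h` embeds. Every element of `A_h(B)` is a normal
form `∑ qⱼ(x) ŷʲ`: left multiplication by `b`, `x` and `ŷ` preserves normal forms, because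
`ŷ q(x) = q(x) ŷ + q'(x) h̃(x)`. The Weyl algebra `A_1(B)` acts on `B[x][Y]` by `x ↦ x·` and
`y ↦ Y· + ∂ₓ`, so `ψ(ŷ)` acts by `W = (Y + ∂ₓ) ∘ h̃`, which raises the `Y`-degree by one and
multiplies the top coefficient by `h̃`. Hence the `Yⁿ`-coefficient of `ψ(∑ qⱼ ŷʲ) · 1`, for `n` the
top index, is `qₙ h̃ⁿ`, which is nonzero because the leading coefficient of `h̃` is a power of that
of `h`.
-/

open Polynomial

section PolynomialRegular

variable {R : Type*} [Ring R]

theorem Polynomial.isRightRegular_of_natDegree_le {p : R[X]} {n : ℕ} (hp : p.natDegree ≤ n)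
    (hn : IsRightRegular (p.coeff n)) : IsRightRegular p := by
  refine isRightRegular_of_non_zero_divisor p fun q hq => ?_
  by_contra hq0
  have hlead : q.leadingCoeff * p.coeff n ≠ 0 := fun h0 =>
    leadingCoeff_ne_zero.mpr hq0 (hn (h0.trans (zero_mul _).symm))
  exact hlead (by rw [leadingCoeff, ← coeff_mul_add_eq_of_natDegree_le le_rfl hp, hq, coeff_zero])

/-- `∑ aₙⁿ Xⁿ`. Since `⊗ₜ` binds tighter than `^`, this is the polynomial in `x` that
`polyEl a` denotes, rather than `a` itself. -/
def coeffPowPoly (a : R[X]) : R[X] :=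
  a.sum fun n c => monomial n (c ^ n)

theorem coeff_coeffPowPoly (a : R[X]) (k : ℕ) :
    (coeffPowPoly a).coeff k = if k ∈ a.support then a.coeff k ^ k else 0 := by
  simp only [coeffPowPoly, Polynomial.sum_def, finsetSum_coeff, coeff_monomial,
    Finset.sum_ite_eq']

theorem coeffPowPoly_one : coeffPowPoly (1 : R[X]) = 1 := by
  ext k
  simp only [coeff_coeffPowPoly, mem_support_iff, coeff_one]
  split_ifs <;> simp_all

theorem natDegree_coeffPowPoly_le (a : R[X]) : (coeffPowPoly a).natDegree ≤ a.natDegree :=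
  natDegree_le_iff_coeff_eq_zero.mpr fun k hk => by
    rw [coeff_coeffPowPoly, if_neg fun hmem => (le_natDegree_of_mem_supp k hmem).not_gt hk]

theorem isRightRegular_coeffPowPoly {a : R[X]} (ha : IsRightRegular a.leadingCoeff) :
    IsRightRegular (coeffPowPoly a) := by
  refine isRightRegular_of_natDegree_le (natDegree_coeffPowPoly_le a) ?_
  rw [coeff_coeffPowPoly]
  split_ifs with hmem
  · exact ha.pow _
  · rwa [← notMem_support_iff.mp hmem]

end PolynomialRegular

section RaisesDegree

variable {R : Type*} [Semiring R]

def RaisesDegree (W : R[X] → R[X]) (g : R) : Prop :=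
  ∀ v n, v.natDegree ≤ n → (W v).natDegree ≤ n + 1 ∧ (W v).coeff (n + 1) = g * v.coeff n

variable {W : R[X] → R[X]} {g : R}

theorem RaisesDegree.natDegree_iterate_le_and_coeff (hW : RaisesDegree W g) (j : ℕ) :
    (W^[j] 1).natDegree ≤ j ∧ (W^[j] 1).coeff j = g ^ j := by
  induction j with
  | zero => simp
  | succ j ih =>
    rw [Function.iterate_succ_apply', pow_succ']
    obtain ⟨hdeg, hcoeff⟩ := hW _ _ ih.1
    exact ⟨hdeg, hcoeff.trans (by rw [ih.2])⟩

theorem RaisesDegree.coeff_sum_C_mul_iterate (hW : RaisesDegree W g) (p : R[X]) :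
    (p.sum fun j q => C q * W^[j] 1).coeff p.natDegree = p.leadingCoeff * g ^ p.natDegree := by
  rw [Polynomial.sum_def, finsetSum_coeff, Finset.sum_eq_single p.natDegree]
  · rw [coeff_C_mul, (hW.natDegree_iterate_le_and_coeff _).2, leadingCoeff]
  · intro j hj hne
    have hlt := (hW.natDegree_iterate_le_and_coeff j).1.trans_lt
      ((le_natDegree_of_mem_supp j hj).lt_of_ne hne)
    rw [coeff_C_mul, coeff_eq_zero_of_natDegree_lt hlt, mul_zero]
  · intro hns
    rw [notMem_support_iff.mp hns, C_0, zero_mul, coeff_zero]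

end RaisesDegree

theorem eval₂_mulLeft_C_apply_one {A R : Type*} [CommSemiring A] [Semiring R] [Algebra A R]
    (f : R →+* Module.End A R[X]) (hf : ∀ q, f q = LinearMap.mulLeft A (C q))
    (W : Module.End A R[X]) (p : R[X]) :
    p.eval₂ f W 1 = p.sum fun j q => C q * W^[j] 1 := by
  simp only [eval₂_eq_sum, Polynomial.sum_def, LinearMap.sum_apply, Module.End.mul_apply, hf,
    LinearMap.mulLeft_apply, Module.End.pow_apply]

def freeOfPoly : B[X] →+* BFreeXY F B :=
  eval₂RingHom' Algebra.TensorProduct.includeLeftRingHom (Xg F B) fun b => by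
    simp [Xg, Commute, SemiconjBy, Algebra.TensorProduct.tmul_mul_tmul]

theorem freeOfPoly_C (b : B) : freeOfPoly F B (C b) = b ⊗ₜ[F] 1 := eval₂_C _ _

theorem freeOfPoly_X : freeOfPoly F B X = Xg F B := eval₂_X _ _

theorem polyEl_eq_freeOfPoly (a : B[X]) : polyEl F B a = freeOfPoly F B (coeffPowPoly a) := by
  simp only [polyEl, coeffPowPoly, Polynomial.sum_def, map_sum, ← C_mul_X_pow_eq_monomial,
    map_mul, map_pow, freeOfPoly_C, freeOfPoly_X, Xg, Algebra.TensorProduct.tmul_pow,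
    Algebra.TensorProduct.tmul_mul_tmul, one_pow, one_mul, mul_one]

namespace Ah

variable (h : B[X])

def ofPoly : B[X] →+* Ah F B h := (mkh F B h).comp (freeOfPoly F B)

theorem ofPoly_C (b : B) : ofPoly F B h (C b) = mkh F B h (b ⊗ₜ 1) := by
  rw [ofPoly, RingHom.comp_apply, freeOfPoly_C]

theorem ofPoly_X : ofPoly F B h X = mkh F B h (Xg F B) := by
  rw [ofPoly, RingHom.comp_apply, freeOfPoly_X]

theorem mkh_polyEl (a : B[X]) : mkh F B h (polyEl F B a) = ofPoly F B h (coeffPowPoly a) := by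
  rw [polyEl_eq_freeOfPoly]; rfl

theorem y_mul_x : mkh F B h (Yg F B) * mkh F B h (Xg F B)
    = mkh F B h (Xg F B) * mkh F B h (Yg F B) + ofPoly F B h (coeffPowPoly h) := by
  rw [← mkh_polyEl, ← map_mul, ← map_mul, ← map_add]
  exact RingQuot.mkRingHom_rel ⟨rfl, rfl⟩

theorem commute_y_tmul_one (b : B) : Commute (mkh F B h (Yg F B)) (mkh F B h (b ⊗ₜ 1)) := by
  refine (Commute.map ?_ (mkh F B h) :)
  simp [Commute, SemiconjBy, Yg, Algebra.TensorProduct.tmul_mul_tmul]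

theorem y_mul_ofPoly (q : B[X]) : mkh F B h (Yg F B) * ofPoly F B h q
    = ofPoly F B h q * mkh F B h (Yg F B) + ofPoly F B h (derivative q * coeffPowPoly h) := by
  induction q using Polynomial.induction_on with
  | C b =>
    rw [ofPoly_C, (commute_y_tmul_one F B h b).eq, derivative_C, zero_mul, map_zero, add_zero]
  | add p q hp hq => simp only [map_add, mul_add, add_mul, hp, hq]; abel
  | monomial n b ih =>
    rw [pow_succ, ← mul_assoc]
    generalize C b * X ^ n = r at ih ⊢
    have hderiv : derivative (r * X) * coeffPowPoly h
        = derivative r * coeffPowPoly h * X + r * coeffPowPoly h := by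
      rw [derivative_mul, derivative_X, mul_one, add_mul, mul_assoc (derivative r), X_mul,
        ← mul_assoc]
    rw [map_mul, ← mul_assoc, ih, add_mul, mul_assoc, ofPoly_X, y_mul_x, ← ofPoly_X, hderiv]
    simp only [map_add, map_mul, mul_add, mul_assoc]
    abel

def ofNormalForm : B[X][X] →+ Ah F B h := eval₂AddMonoidHom (ofPoly F B h) (mkh F B h (Yg F B))

theorem ofNormalForm_monomial (j : ℕ) (q : B[X]) :
    ofNormalForm F B h (monomial j q) = ofPoly F B h q * mkh F B h (Yg F B) ^ j :=
  eval₂_monomial _ _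

theorem ofPoly_mul_mem_mrange (r : B[X]) {a : Ah F B h}
    (ha : a ∈ AddMonoidHom.mrange (ofNormalForm F B h)) :
    ofPoly F B h r * a ∈ AddMonoidHom.mrange (ofNormalForm F B h) := by
  obtain ⟨p, rfl⟩ := ha
  induction p using Polynomial.induction_on' with
  | add p q hp hq => rw [map_add, mul_add]; exact add_mem hp hq
  | monomial j q => exact ⟨monomial j (r * q), by rw [ofNormalForm_monomial,
      ofNormalForm_monomial, map_mul, mul_assoc]⟩

theorem y_mul_mem_mrange {a : Ah F B h} (ha : a ∈ AddMonoidHom.mrange (ofNormalForm F B h)) :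
    mkh F B h (Yg F B) * a ∈ AddMonoidHom.mrange (ofNormalForm F B h) := by
  obtain ⟨p, rfl⟩ := ha
  induction p using Polynomial.induction_on' with
  | add p q hp hq => rw [map_add, mul_add]; exact add_mem hp hq
  | monomial j q =>
    refine ⟨monomial (j + 1) q + monomial j (derivative q * coeffPowPoly h), ?_⟩
    rw [map_add, ofNormalForm_monomial, ofNormalForm_monomial, ofNormalForm_monomial,
      ← mul_assoc, y_mul_ofPoly, add_mul, mul_assoc, ← pow_succ']

theorem mkh_one_tmul_mul_mem_mrange (m : FreeAlgebra F (Fin 2)) {a : Ah F B h}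
    (ha : a ∈ AddMonoidHom.mrange (ofNormalForm F B h)) :
    mkh F B h (1 ⊗ₜ m) * a ∈ AddMonoidHom.mrange (ofNormalForm F B h) := by
  induction m using FreeAlgebra.induction generalizing a with
  | grade0 r =>
    rw [Algebra.algebraMap_eq_smul_one, ← TensorProduct.smul_tmul,
      ← Algebra.algebraMap_eq_smul_one, ← ofPoly_C]
    exact ofPoly_mul_mem_mrange F B h _ ha
  | grade1 i =>
    fin_cases i
    · exact ofPoly_X F B h ▸ ofPoly_mul_mem_mrange F B h X ha
    · exact y_mul_mem_mrange F B h ha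
  | mul m₁ m₂ ih₁ ih₂ =>
    rw [← one_mul (1 : B), ← Algebra.TensorProduct.tmul_mul_tmul, map_mul, mul_assoc]
    exact ih₁ (ih₂ ha)
  | add m₁ m₂ ih₁ ih₂ =>
    rw [TensorProduct.tmul_add, map_add, add_mul]
    exact add_mem (ih₁ ha) (ih₂ ha)

theorem ofNormalForm_surjective : Function.Surjective (ofNormalForm F B h) := by
  intro a
  obtain ⟨t, rfl⟩ := RingQuot.mkRingHom_surjective (AhRel F B h) a
  suffices mkh F B h t * 1 ∈ AddMonoidHom.mrange (ofNormalForm F B h) by rwa [mul_one] at this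
  have hone : (1 : Ah F B h) ∈ AddMonoidHom.mrange (ofNormalForm F B h) :=
    ⟨1, eval₂_one _ _⟩
  induction t using TensorProduct.induction_on with
  | zero => rw [map_zero, zero_mul]; exact zero_mem _
  | tmul b m =>
    rw [← mul_one b, ← one_mul m, ← Algebra.TensorProduct.tmul_mul_tmul, map_mul, mul_assoc,
      ← ofPoly_C]
    exact ofPoly_mul_mem_mrange F B h _ (mkh_one_tmul_mul_mem_mrange F B h m hone)
  | add t₁ t₂ ih₁ ih₂ => rw [map_add, add_mul]; exact add_mem ih₁ ih₂

theorem comp_ofPoly {h' : B[X]} (ψ : Ah F B h →ₐ[F] Ah F B h')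
    (hx : ψ (mkh F B h (Xg F B)) = mkh F B h' (Xg F B))
    (hB : ∀ b : B, ψ (incB F B h b) = incB F B h' b) :
    (ψ : Ah F B h →+* Ah F B h').comp (ofPoly F B h) = ofPoly F B h' :=
  ringHom_ext (fun b => by simpa [ofPoly_C, incB] using hB b) (by simpa [ofPoly_X] using hx)

end Ah

section WeylRepresentation

def coeffDerivative : Module.End F B[X][X] :=
  lsum fun k => (monomial k).restrictScalars F ∘ₗ (derivative (R := B)).restrictScalars F

theorem coeff_coeffDerivative (v : B[X][X]) (k : ℕ) :
    (coeffDerivative F B v).coeff k = derivative (v.coeff k) := by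
  simp only [coeffDerivative, lsum_apply, Polynomial.sum_def, LinearMap.coe_comp,
    LinearMap.coe_restrictScalars, Function.comp_apply, finsetSum_coeff, coeff_monomial,
    Finset.sum_ite_eq']
  split_ifs with hk
  · rfl
  · rw [notMem_support_iff.mp hk, map_zero]

theorem coeffDerivative_C_X_mul (v : B[X][X]) :
    coeffDerivative F B (C X * v) = v + C X * coeffDerivative F B v := by
  ext k
  rw [coeff_coeffDerivative, coeff_C_mul, coeff_add, coeff_C_mul, coeff_coeffDerivative,
    derivative_mul, derivative_X, one_mul]

theorem coeffDerivative_C_C_mul (b : B) (v : B[X][X]) :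
    coeffDerivative F B (C (C b) * v) = C (C b) * coeffDerivative F B v := by
  ext k
  rw [coeff_coeffDerivative, coeff_C_mul, coeff_C_mul, coeff_coeffDerivative, derivative_C_mul]

theorem natDegree_coeffDerivative_le {v : B[X][X]} {n : ℕ} (hv : v.natDegree ≤ n) :
    (coeffDerivative F B v).natDegree ≤ n :=
  natDegree_le_iff_coeff_eq_zero.mpr fun k hk => by
    rw [coeff_coeffDerivative, coeff_eq_zero_of_natDegree_lt (hv.trans_lt hk), map_zero]

def weylX : Module.End F B[X][X] := LinearMap.mulLeft F (C X)

def weylY : Module.End F B[X][X] := LinearMap.mulLeft F X + coeffDerivative F B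

def weylScalar : B →ₐ[F] Module.End F B[X][X] :=
  (Algebra.lmul F B[X][X]).comp (CAlgHom.comp CAlgHom)

theorem weylScalar_apply (b : B) (v : B[X][X]) : weylScalar F B b v = C (C b) * v := rfl

theorem weylY_mul_weylX : weylY F B * weylX F B = weylX F B * weylY F B + 1 := by
  ext1 v
  simp only [weylX, weylY, Module.End.mul_apply, LinearMap.add_apply, Module.End.one_apply,
    LinearMap.mulLeft_apply, coeffDerivative_C_X_mul, mul_add, ← mul_assoc,
    (commute_X (C X)).eq]
  rw [add_comm v, add_assoc]

theorem commute_weylScalar_weylX (b : B) : Commute (weylScalar F B b) (weylX F B) := by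
  ext1 v
  simp only [Module.End.mul_apply, weylScalar_apply, weylX, LinearMap.mulLeft_apply, ← mul_assoc,
    ← C_mul, (commute_X (C b)).symm.eq]

theorem commute_weylScalar_weylY (b : B) : Commute (weylScalar F B b) (weylY F B) := by
  ext1 v
  simp only [Module.End.mul_apply, weylScalar_apply, weylY, LinearMap.add_apply,
    LinearMap.mulLeft_apply, mul_add, ← mul_assoc, (commute_X (C (C b))).symm.eq,
    coeffDerivative_C_C_mul]

def weylFreeRep : BFreeXY F B →ₐ[F] Module.End F B[X][X] :=
  Algebra.TensorProduct.lift (weylScalar F B) (FreeAlgebra.lift F ![weylX F B, weylY F B])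
    fun b m => by
      induction m using FreeAlgebra.induction with
      | grade0 r => rw [AlgHom.commutes]; exact (Algebra.commutes r _).symm
      | grade1 i =>
        fin_cases i
        · simpa using commute_weylScalar_weylX F B b
        · simpa using commute_weylScalar_weylY F B b
      | mul m₁ m₂ ih₁ ih₂ => rw [map_mul]; exact ih₁.mul_right ih₂
      | add m₁ m₂ ih₁ ih₂ => rw [map_add]; exact ih₁.add_right ih₂

theorem weylFreeRep_tmul_one (b : B) : weylFreeRep F B (b ⊗ₜ 1) = weylScalar F B b := by
  simp [weylFreeRep]

theorem weylFreeRep_Xg : weylFreeRep F B (Xg F B) = weylX F B := by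
  simp [weylFreeRep, Xg]

theorem weylFreeRep_Yg : weylFreeRep F B (Yg F B) = weylY F B := by
  simp [weylFreeRep, Yg]

def weylRep : Ah F B 1 →ₐ[F] Module.End F B[X][X] :=
  RingQuot.liftAlgHom F ⟨weylFreeRep F B, by
    rintro _ _ ⟨rfl, rfl⟩
    rw [polyEl_eq_freeOfPoly, coeffPowPoly_one, map_one, map_mul, map_add, map_mul, map_one,
      weylFreeRep_Xg, weylFreeRep_Yg, weylY_mul_weylX]⟩

theorem weylRep_mkh (t : BFreeXY F B) : weylRep F B (mkh F B 1 t) = weylFreeRep F B t := by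
  rw [mkh, ← RingQuot.mkAlgHom_coe F]
  exact RingQuot.liftAlgHom_mkAlgHom_apply F _ _ t

theorem weylRep_ofPoly (q : B[X]) :
    weylRep F B (Ah.ofPoly F B 1 q) = LinearMap.mulLeft F (C q) := by
  have hcomp : (weylRep F B : Ah F B 1 →+* Module.End F B[X][X]).comp (Ah.ofPoly F B 1)
      = (Algebra.lmul F B[X][X] : B[X][X] →+* Module.End F B[X][X]).comp C := by
    refine ringHom_ext (fun b => ?_) ?_
    · simp [Ah.ofPoly_C, weylRep_mkh, weylFreeRep_tmul_one]
      rfl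
    · simp [Ah.ofPoly_X, weylRep_mkh, weylFreeRep_Xg]
      rfl
  exact RingHom.congr_fun hcomp q

theorem raisesDegree_weylY_mul_mulLeft_C (g : B[X]) :
    RaisesDegree (weylY F B * LinearMap.mulLeft F (C g)) g := by
  intro v n hv
  have hgv : (C g * v).natDegree ≤ n := (natDegree_C_mul_le g v).trans hv
  change (X * (C g * v) + coeffDerivative F B (C g * v)).natDegree ≤ n + 1 ∧
    (X * (C g * v) + coeffDerivative F B (C g * v)).coeff (n + 1) = g * v.coeff n
  refine ⟨natDegree_add_le_of_degree_le ?_ ?_, ?_⟩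
  · exact (natDegree_mul_le.trans (add_le_add natDegree_X_le hgv)).trans_eq (add_comm 1 n)
  · exact (natDegree_coeffDerivative_le F B hgv).trans n.le_succ
  · rw [coeff_add, coeff_X_mul, coeff_C_mul, coeff_coeffDerivative,
      coeff_eq_zero_of_natDegree_lt (hgv.trans_lt n.lt_succ_self), map_zero, add_zero]

end WeylRepresentation

theorem stmt8 (h : Polynomial B)
    (hlead : NotZD h.leadingCoeff)
    (ψ : Ah F B h →ₐ[F] Ah F B 1)
    (hx : ψ (mkh F B h (Xg F B)) = mkh F B 1 (Xg F B))
    (hy : ψ (mkh F B h (Yg F B)) = mkh F B 1 (Yg F B) * mkh F B 1 (polyEl F B h))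
    (hB : ∀ b : B, ψ (incB F B h b) = incB F B 1 b) :
    Function.Injective ψ := by
  set W := weylY F B * LinearMap.mulLeft F (C (coeffPowPoly h))
  have hW : weylRep F B (ψ (mkh F B h (Yg F B))) = W := by
    rw [hy, map_mul, weylRep_mkh, weylFreeRep_Yg, Ah.mkh_polyEl, weylRep_ofPoly]
  have hvec (p : B[X][X]) :
      weylRep F B (ψ (Ah.ofNormalForm F B h p)) 1 = p.sum fun j q => C q * W^[j] 1 := by
    rw [Ah.ofNormalForm, eval₂AddMonoidHom_apply, ← RingHom.coe_coe ψ,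
      ← RingHom.coe_coe (weylRep F B), hom_eval₂, hom_eval₂, Ah.comp_ofPoly F B h ψ hx hB,
      RingHom.coe_coe, RingHom.coe_coe, hW]
    exact eval₂_mulLeft_C_apply_one _ (weylRep_ofPoly F B) W p
  rw [injective_iff_map_eq_zero]
  intro a ha
  obtain ⟨p, rfl⟩ := Ah.ofNormalForm_surjective F B h a
  obtain rfl : p = 0 := by
    by_contra hp
    have hcoeff :=
      (raisesDegree_weylY_mul_mulLeft_C F B (coeffPowPoly h)).coeff_sum_C_mul_iterate p
    rw [← hvec, ha, map_zero, LinearMap.zero_apply, coeff_zero] at hcoeff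
    have hreg : IsRightRegular (coeffPowPoly h ^ p.natDegree) :=
      (isRightRegular_coeffPowPoly
        (isRightRegular_of_non_zero_divisor _ fun c => (hlead c).1)).pow _
    exact leadingCoeff_ne_zero.mpr hp (hreg (hcoeff.symm.trans (zero_mul _).symm))
  exact map_zero _
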